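/- Let Y be a meromorphic vector field on an open set U ⊆ ℂ², let F be its associated foliation, and let dT be the time-form induced by Y on the regular leaves of F (defined by dT·Y = 1, with zeros and poles of Y deleted from the leaves). If Y is semi-complete on U, then for every regular leaf L of F and every embedded curve c : [0,1] → L, the integral of dT over c does not vanish. -/

import Mathlib

open Metric Set Filter Asymptotics

noncomputable section

/-! ### Basic vocabulary: vector fields on ℂ², flows, semi-complete vector fields,
the line at infinity of ℂP², separatrices and dicritical singularities, blow-ups. -/

abbrev C2 := ℂ × ℂ

/-- Determinant of two vectors of ℂ² (vanishing = collinearity). -/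
def det2 (a b : C2) : ℂ := a.1 * b.2 - a.2 * b.1

/-- Evaluation of a two-variable polynomial at a point of ℂ². -/
def pev (P : MvPolynomial (Fin 2) ℂ) (z : C2) : ℂ :=
  MvPolynomial.eval ![z.1, z.2] P

/-- A map ℂ² → ℂ² with polynomial components. -/
def IsPolyMap (σ : C2 → C2) : Prop :=
  ∃ A B : MvPolynomial (Fin 2) ℂ, ∀ z, σ z = (pev A z, pev B z)

/-- A holomorphic vector field on ℂ² is complete if it is associated to a (jointly
holomorphic) global flow `Φ : ℂ × ℂ² → ℂ²`. -/
def IsCompleteVF (X : C2 → C2) : Prop :=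
  ∃ Φ : ℂ → C2 → C2,
    (Differentiable ℂ fun q : ℂ × C2 => Φ q.1 q.2) ∧
    (∀ p, Φ 0 p = p) ∧
    (∀ t s p, Φ (t + s) p = Φ t (Φ s p)) ∧
    (∀ p, HasDerivAt (fun T => Φ T p) (X p) 0)

/-- Semi-completeness of a (meromorphic) vector field `Y` on `U` with pole set `D`:
existence of a semi-global holomorphic flow `Φ_sg : Ω ⊆ ℂ × U → U` satisfying the flow
equation at `T = 0`, the group law where defined, and the escape property: orbits
reaching the boundary of `Ω` leave every compact subset of `U \ D`. -/
def IsSemicompleteOn (Y : C2 → C2) (U D : Set C2) : Prop :=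
  ∃ (Ω : Set (ℂ × C2)) (Φ : ℂ × C2 → C2),
    IsOpen Ω ∧
    (∀ q ∈ Ω, q.2 ∈ U \ D) ∧
    (∀ p ∈ U \ D, ((0 : ℂ), p) ∈ Ω) ∧
    (∀ q ∈ Ω, Φ q ∈ U \ D) ∧
    (∀ q ∈ Ω, DifferentiableAt ℂ Φ q) ∧
    (∀ p ∈ U \ D, Φ (0, p) = p) ∧
    (∀ p ∈ U \ D, HasDerivAt (fun T : ℂ => Φ (T, p)) (Y p) 0) ∧
    (∀ T₁ T₂ p, (T₁ + T₂, p) ∈ Ω → (T₂, p) ∈ Ω → (T₁, Φ (T₂, p)) ∈ Ω →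
      Φ (T₁ + T₂, p) = Φ (T₁, Φ (T₂, p))) ∧
    (∀ (s : ℕ → ℂ × C2) (q : ℂ × C2), (∀ n, s n ∈ Ω) → q ∈ frontier Ω →
      Tendsto s atTop (nhds q) →
      ∀ K : Set C2, K ⊆ U \ D → IsCompact K → ∀ᶠ n in atTop, Φ (s n) ∉ K)

/-! Charts at infinity of ℂP² = ℂ² ∪ Δ.  In both charts the line at infinity Δ
corresponds to `{w | w.1 = 0}`; `chart1`/`chart2` send chart coordinates to affine
coordinates.  `chart1` is an involution; `chart2inv` is the inverse of `chart2`. -/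

def chart1 (w : C2) : C2 := (1 / w.1, w.2 / w.1)
def chart2 (w : C2) : C2 := (w.2 / w.1, 1 / w.1)
def chart2inv (z : C2) : C2 := (1 / z.2, z.1 / z.2)

/-- A separatrix (local analytic curve invariant by the foliation induced by `X` on ℂP²)
through the point `p` of the line at infinity, seen in the chart `ψ`. -/
def IsSepAtInf (X : C2 → C2) (ψ : C2 → C2) (p : C2) (γ : ℂ → C2) (r : ℝ) : Prop :=
  0 < r ∧ AnalyticOnNhd ℂ γ (ball (0 : ℂ) r) ∧ γ 0 = p ∧
  (∃ t ∈ ball (0 : ℂ) r, γ t ≠ p) ∧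
  ∀ t ∈ ball (0 : ℂ) r, (γ t).1 ≠ 0 →
    det2 (deriv (fun s => ψ (γ s)) t) (X (ψ (γ t))) = 0

/-- Dicritical singularity of `F_X` at the point `p` of the line at infinity:
infinitely many pairwise germwise-distinct separatrices pass through `p`. -/
def DicriticalAtInf (X : C2 → C2) (ψ : C2 → C2) (p : C2) : Prop :=
  ∃ (γ : ℕ → ℂ → C2) (r : ℕ → ℝ),
    (∀ n, IsSepAtInf X ψ p (γ n) (r n)) ∧
    ∀ m n, m ≠ n → ∀ ε > 0,
      (γ m '' ball (0 : ℂ) (r m)) ∩ ball p ε ≠ (γ n '' ball (0 : ℂ) (r n)) ∩ ball p ε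

/-- A separatrix at `p` of the (singular) foliation defined by a local vector field `Z`. -/
def IsSepAt (Z : C2 → C2) (p : C2) (γ : ℂ → C2) (r : ℝ) : Prop :=
  0 < r ∧ AnalyticOnNhd ℂ γ (ball (0 : ℂ) r) ∧ γ 0 = p ∧
  (∃ t ∈ ball (0 : ℂ) r, γ t ≠ p) ∧
  ∀ t ∈ ball (0 : ℂ) r, det2 (deriv γ t) (Z (γ t)) = 0

/-- Dicritical singularity at `p` of the foliation defined by `Z`: infinitely many
pairwise germwise-distinct separatrices through `p`. -/
def DicriticalAt (Z : C2 → C2) (p : C2) : Prop :=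
  ∃ (γ : ℕ → ℂ → C2) (r : ℕ → ℝ),
    (∀ n, IsSepAt Z p (γ n) (r n)) ∧
    ∀ m n, m ≠ n → ∀ ε > 0,
      (γ m '' ball (0 : ℂ) (r m)) ∩ ball p ε ≠ (γ n '' ball (0 : ℂ) (r n)) ∩ ball p ε

/-- `p` (in the chart `ψ` at infinity) is a regular point of the foliation induced by `X`
on ℂP²: the foliation extends as a nonvanishing holomorphic line field near `p`. -/
def RegularPtAtInf (X : C2 → C2) (ψ : C2 → C2) (p : C2) : Prop :=
  ∃ (ρ : ℝ) (V : C2 → C2), 0 < ρ ∧ AnalyticOnNhd ℂ V (ball p ρ) ∧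
    (∀ w ∈ ball p ρ, V w ≠ 0) ∧
    ∀ w ∈ ball p ρ, w.1 ≠ 0 → det2 (fderiv ℂ ψ w (V w)) (X (ψ w)) = 0

/-! ### Blow-ups -/

/-- Elementary blow-up chart map centered at the point `(0, c)` (with `c = e.2`); in the
new coordinates the exceptional divisor is `{w | w.1 = 0}`.  The Boolean `e.1` selects
one of the two standard charts of the blow-up. -/
def elemMap (e : Bool × ℂ) (w : C2) : C2 :=
  if e.1 then (w.1, e.2 + w.1 * w.2) else (w.1 * w.2, e.2 + w.1)

/-- Chart map of an iterated blow-up; the head of the list is the first blow-up, and each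
subsequent blow-up is centered at a point `(0, c)` of the exceptional divisor of the
previous one. -/
def chainMap : List (Bool × ℂ) → C2 → C2
  | [] => id
  | e :: L => elemMap e ∘ chainMap L

/-- The two standard charts of the blow-up of the origin of ℂ²; in both, the exceptional
divisor `π⁻¹(0)` is `{w | w.1 = 0}`. -/
def sigma1 (w : C2) : C2 := (w.1, w.1 * w.2)
def sigma2 (w : C2) : C2 := (w.1 * w.2, w.1)

def trC (L : C2 →L[ℂ] C2) : ℂ := LinearMap.trace ℂ C2 L.toLinearMap
def detC (L : C2 →L[ℂ] C2) : ℂ := LinearMap.det L.toLinearMap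
def detfd (φ : C2 → C2) (w : C2) : ℂ := detC (fderiv ℂ φ w)

/-- A reduced local holomorphic generator, near the point `(0, t₀)` of the exceptional
divisor (in the first chart `sigma1`), of the blow-up of the foliation defined by `Z`:
a holomorphic vector field with isolated zeros tangent to the lifted foliation. -/
def ReducedGen1 (Z W : C2 → C2) (t₀ : ℂ) (r : ℝ) : Prop :=
  0 < r ∧ AnalyticOnNhd ℂ W (ball ((0 : ℂ), t₀) r) ∧
  (∀ w ∈ ball ((0 : ℂ), t₀) r, W w = 0 → ∀ᶠ w' in nhdsWithin w {w}ᶜ, W w' ≠ 0) ∧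
  (∀ w ∈ ball ((0 : ℂ), t₀) r, w.1 ≠ 0 →
    det2 (fderiv ℂ sigma1 w (W w)) (Z (sigma1 w)) = 0)

/-- As `ReducedGen1`, near the point of the exceptional divisor at infinity of the first
chart (i.e. the origin of the second chart `sigma2`). -/
def ReducedGen2 (Z W : C2 → C2) (r : ℝ) : Prop :=
  0 < r ∧ AnalyticOnNhd ℂ W (ball ((0 : ℂ), (0 : ℂ)) r) ∧
  (∀ w ∈ ball ((0 : ℂ), (0 : ℂ)) r, W w = 0 → ∀ᶠ w' in nhdsWithin w {w}ᶜ, W w' ≠ 0) ∧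
  (∀ w ∈ ball ((0 : ℂ), (0 : ℂ)) r, w.1 ≠ 0 →
    det2 (fderiv ℂ sigma2 w (W w)) (Z (sigma2 w)) = 0)

/-- Singular point of the blown-up foliation `F̃` on the exceptional divisor
`π⁻¹(0) ≅ ℙ¹` (realized as `OnePoint ℂ`). -/
def SingExc (Z : C2 → C2) (p : OnePoint ℂ) : Prop :=
  (p = OnePoint.infty ∧ ∃ W r, ReducedGen2 Z W r ∧ W (0, 0) = 0) ∨
  (∃ t₀ : ℂ, p = OnePoint.some t₀ ∧ ∃ W r, ReducedGen1 Z W t₀ r ∧ W (0, t₀) = 0)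

/-- The linear part of the blown-up foliation at the singular point `p` of the
exceptional divisor satisfies the property `Pc`. -/
def EigAtExc (Z : C2 → C2) (p : OnePoint ℂ) (Pc : (C2 →L[ℂ] C2) → Prop) : Prop :=
  (p = OnePoint.infty ∧ ∃ W r, ReducedGen2 Z W r ∧ W (0, 0) = 0 ∧
    Pc (fderiv ℂ W (0, 0))) ∨
  (∃ t₀ : ℂ, p = OnePoint.some t₀ ∧ ∃ W r, ReducedGen1 Z W t₀ r ∧ W (0, t₀) = 0 ∧
    Pc (fderiv ℂ W (0, t₀)))

/-- Eigenvalues `(1, 1)` (up to a common factor) with a nontrivial Jordan block: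
an LJ-singularity, i.e. the one given by the linear field `(x+y)∂/∂x + y∂/∂y`. -/
def isLJ (L : C2 →L[ℂ] C2) : Prop :=
  detC L ≠ 0 ∧ (trC L) ^ 2 = 4 * detC L ∧ ¬ ∀ v : C2, L v = (trC L / 2) • v

/-- Eigenvalue ratio `-1` (eigenvalues `-1, 1` up to a common factor). -/
def isRatioMinusOne (L : C2 →L[ℂ] C2) : Prop := trC L = 0 ∧ detC L ≠ 0

/-- Eigenvalue ratio `-1/2` (eigenvalues `-1, 2` up to a common factor). -/
def isRatioMinusHalf (L : C2 →L[ℂ] C2) : Prop :=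
  detC L ≠ 0 ∧ 2 * (trC L) ^ 2 + detC L = 0

/-- Saddle-node: exactly one nonzero eigenvalue (i.e. eigenvalues `1, 0` up to factor). -/
def isSN (L : C2 →L[ℂ] C2) : Prop := detC L = 0 ∧ trC L ≠ 0

/-- Saddle-node whose strong invariant manifold is contained in the exceptional divisor:
the direction `(0,1)` tangent to `{w.1 = 0}` is the eigendirection of the nonzero
eigenvalue. -/
def isSNalongExc (L : C2 →L[ℂ] C2) : Prop :=
  detC L = 0 ∧ trC L ≠ 0 ∧ L (0, 1) = trC L • (((0 : ℂ), (1 : ℂ)) : C2)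

/-- Both eigenvalues nonzero, with ratio `λ₁/λ₂ = -n/m`, `n, m ∈ ℕ*`. -/
def isNegRationalRatio (L : C2 →L[ℂ] C2) : Prop :=
  detC L ≠ 0 ∧ ∃ m n : ℕ, 0 < m ∧ 0 < n ∧
    (((m * n : ℕ) : ℂ)) * (trC L) ^ 2 + ((m : ℂ) - (n : ℂ)) ^ 2 * detC L = 0

/-- A simple singularity: at least one eigenvalue is nonzero. -/
def isSimpleLin (L : C2 →L[ℂ] C2) : Prop := trC L ≠ 0 ∨ detC L ≠ 0

/-- The blow-up of `Y` has order zero along the exceptional divisor: somewhere on the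
exceptional divisor the pulled-back vector field extends holomorphically without
vanishing identically (i.e. `π⁻¹(0)` is neither a zero nor a pole divisor of `Ỹ`). -/
def RegularOnExc (Y : C2 → C2) : Prop :=
  ∃ (t₀ : ℂ) (r : ℝ) (g : C2 → C2), 0 < r ∧
    AnalyticOnNhd ℂ g (ball ((0 : ℂ), t₀) r) ∧
    (∀ w ∈ ball ((0 : ℂ), t₀) r, w.1 ≠ 0 → fderiv ℂ sigma1 w (g w) = Y (sigma1 w)) ∧
    (∃ w ∈ ball ((0 : ℂ), t₀) r, w.1 = 0 ∧ g w ≠ 0)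

/-- `(0, c)` is a non-simple singular point (both eigenvalues zero) of the pullback of
the foliation of `Z` under the iterated blow-up chart `φ`. -/
def NonSimpleSingAt (Z : C2 → C2) (φ : C2 → C2) (p : C2) : Prop :=
  ∃ (W : C2 → C2) (r : ℝ), 0 < r ∧ AnalyticOnNhd ℂ W (ball p r) ∧
    (∀ w ∈ ball p r, W w = 0 → ∀ᶠ w' in nhdsWithin w {w}ᶜ, W w' ≠ 0) ∧
    (∀ w ∈ ball p r, detfd φ w ≠ 0 → det2 (fderiv ℂ φ w (W w)) (Z (φ w)) = 0) ∧
    W p = 0 ∧ trC (fderiv ℂ W p) = 0 ∧ detC (fderiv ℂ W p) = 0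

/-- A sequence of blow-ups as in Seidenberg's theorem: each blow-up is centered at a
point of the previous exceptional divisor which is a non-simple singularity of the
current transformed foliation. -/
def ValidFrom (Z : C2 → C2) : (C2 → C2) → List (Bool × ℂ) → Prop
  | _, [] => True
  | φ, e :: L => NonSimpleSingAt Z φ ((0 : ℂ), e.2) ∧ ValidFrom Z (φ ∘ elemMap e) L

/-- `X` has adapted poles at the point `(0, v₀)` (in the chart `ψ`) of the line at
infinity: for every finite sequence of blow-ups beginning at this point and every
irreducible component of the resulting exceptional divisor, either the pulled-back
vector field `X̃` vanishes identically on the component or the component consists of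
poles of `X̃` (equivalently: every local holomorphic extension of `X̃` over the
component vanishes identically on it). -/
def AdaptedAt (X : C2 → C2) (ψ : C2 → C2) (v₀ : ℂ) : Prop :=
  ∀ (L : List (Bool × ℂ)) (hL : L ≠ []), (L.head hL).2 = v₀ →
    ∀ (c : ℂ) (r : ℝ) (g : C2 → C2), 0 < r →
      AnalyticOnNhd ℂ g (ball ((0 : ℂ), c) r) →
      (∀ w ∈ ball ((0 : ℂ), c) r, detfd (fun w' => ψ (chainMap L w')) w ≠ 0 →
        fderiv ℂ (fun w' => ψ (chainMap L w')) w (g w) = X (ψ (chainMap L w))) →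
      ∀ w ∈ ball ((0 : ℂ), c) r, w.1 = 0 → g w = 0

/-- A rational first integral for the foliation defined by the polynomial vector field
`(P, Q)` (equivalently, by Serre's GAGA/Chow, a meromorphic first integral on ℂP²). -/
def HasRationalFirstIntegral (P Q : MvPolynomial (Fin 2) ℂ) : Prop :=
  ∃ A B : MvPolynomial (Fin 2) ℂ, B ≠ 0 ∧ (¬ ∃ c : ℂ, A = MvPolynomial.C c * B) ∧
    B * (P * MvPolynomial.pderiv 0 A + Q * MvPolynomial.pderiv 1 A)
      = A * (P * MvPolynomial.pderiv 0 B + Q * MvPolynomial.pderiv 1 B)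

/-- Assumption (2) of Section 4 and 5: every regular orbit of `Y` contains at most one
singular point of `Y`, whose order is one (formulated on embedded analytic discs inside
regular leaves of the foliation of `Z`, with `h` the restriction of `Y` expressed in the
disc coordinate). -/
def AtMostOneSimpleZeroPerOrbit (Y Z : C2 → C2) (U : Set C2) : Prop :=
  ∀ (r : ℝ) (γ : ℂ → C2) (h : ℂ → ℂ), 0 < r →
    AnalyticOnNhd ℂ γ (ball (0 : ℂ) r) → InjOn γ (ball (0 : ℂ) r) →
    (∀ t ∈ ball (0 : ℂ) r, γ t ∈ U ∧ Z (γ t) ≠ 0 ∧ deriv γ t ≠ 0) →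
    AnalyticOnNhd ℂ h (ball (0 : ℂ) r) →
    (∀ t ∈ ball (0 : ℂ) r, Y (γ t) = h t • deriv γ t) →
    ∀ t₁ ∈ ball (0 : ℂ) r, ∀ t₂ ∈ ball (0 : ℂ) r,
      h t₁ = 0 → h t₂ = 0 → t₁ = t₂ ∧ deriv h t₁ ≠ 0

/-- Assumption (3) of Section 4 and 5: the regular orbits of `Y` carry at most one
independent period: the time-form integrals of any two loops contained in the same
regular leaf are ℤ-linearly dependent. -/
def AtMostOnePeriod (Y Z : C2 → C2) (U : Set C2) : Prop :=
  ∀ (c₁ c₂ : ℝ → C2) (μ₁ μ₂ : ℝ → ℂ),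
    ContinuousOn μ₁ (Icc 0 1) → ContinuousOn μ₂ (Icc 0 1) →
    (∀ s ∈ Icc (0 : ℝ) 1, HasDerivAt c₁ (μ₁ s • Y (c₁ s)) s ∧ c₁ s ∈ U ∧
      Y (c₁ s) ≠ 0 ∧ Z (c₁ s) ≠ 0) →
    (∀ s ∈ Icc (0 : ℝ) 1, HasDerivAt c₂ (μ₂ s • Y (c₂ s)) s ∧ c₂ s ∈ U ∧
      Y (c₂ s) ≠ 0 ∧ Z (c₂ s) ≠ 0) →
    c₁ 0 = c₁ 1 → c₂ 0 = c₂ 1 →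
    (∃ (γ : ℝ → C2) (ν : ℝ → ℂ), ContinuousOn ν (Icc 0 1) ∧ γ 0 = c₁ 0 ∧ γ 1 = c₂ 0 ∧
      ∀ s ∈ Icc (0 : ℝ) 1, HasDerivAt γ (ν s • Z (γ s)) s ∧ γ s ∈ U ∧ Z (γ s) ≠ 0) →
    ∃ m n : ℤ, ¬(m = 0 ∧ n = 0) ∧
      (m : ℂ) * ∫ s in (0 : ℝ)..1, μ₁ s = (n : ℂ) * ∫ s in (0 : ℝ)..1, μ₂ s

/-- Trivial monodromy (first-return map along the fibers of `(x,y) ↦ y`) of the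
saddle-node foliation defined by `A(x,y) ∂/∂x + y^(p+1) ∂/∂y`. -/
def TrivialMonodromy (A : C2 → ℂ) (p : ℕ) : Prop :=
  ∃ ε > 0, ∀ y₀ : ℂ, y₀ ≠ 0 → ‖y₀‖ < ε → ∀ x : ℝ → ℂ,
    ContinuousOn x (Icc 0 1) → (∀ s ∈ Icc (0 : ℝ) 1, ‖x s‖ < ε) →
    (∀ s ∈ Icc (0 : ℝ) 1, HasDerivAt x
      ((2 * (Real.pi : ℂ) * Complex.I) *
        A (x s, y₀ * Complex.exp (2 * (Real.pi : ℂ) * Complex.I * (s : ℂ))) /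
        (y₀ * Complex.exp (2 * (Real.pi : ℂ) * Complex.I * (s : ℂ))) ^ p) s) →
    x 1 = x 0


/-- The integral of the time-form of a semi-complete meromorphic vector field over an
embedded curve contained in a regular leaf of the associated foliation never vanishes. -/
theorem timeform_integral_ne_zero
    (U : Set C2) (hU : IsOpen U)
    (f₁ g₁ f₂ g₂ : C2 → ℂ)
    (hf₁ : AnalyticOnNhd ℂ f₁ U) (hg₁ : AnalyticOnNhd ℂ g₁ U)
    (hf₂ : AnalyticOnNhd ℂ f₂ U) (hg₂ : AnalyticOnNhd ℂ g₂ U)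
    (Y : C2 → C2)
    (hY : ∀ z ∈ U, g₁ z ≠ 0 → g₂ z ≠ 0 → Y z = (f₁ z / g₁ z, f₂ z / g₂ z))
    (D : Set C2) (hD : D = {z ∈ U | g₁ z = 0 ∨ g₂ z = 0})
    (hsc : IsSemicompleteOn Y U D)
    -- `c` is an embedded curve inside a regular leaf (tangent to `Y`, avoiding the
    -- zeros and poles of `Y`), and `lam = dT(c')` is the time-form along it
    (c : ℝ → C2) (lam : ℝ → ℂ)
    (hc : ContinuousOn c (Icc 0 1))
    (hlam : ContinuousOn lam (Icc 0 1))
    (hinj : InjOn c (Icc 0 1))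
    (hmem : ∀ s ∈ Icc (0 : ℝ) 1, c s ∈ U \ D ∧ Y (c s) ≠ 0)
    (htang : ∀ s ∈ Icc (0 : ℝ) 1, HasDerivAt c (lam s • Y (c s)) s) :
    ∫ s in (0 : ℝ)..1, lam s ≠ 0 := by
  intro hzero
  obtain ⟨Ω, Φ, hΩo, hΩsub, h0mem, hΦmem, hΦdiff, hΦ0, hflow, hgroup, hesc⟩ := hsc
  have h01 : (0:ℝ) ∈ Icc (0:ℝ) 1 := ⟨le_refl 0, zero_le_one⟩
  have h11 : (1:ℝ) ∈ Icc (0:ℝ) 1 := ⟨zero_le_one, le_refl 1⟩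
  set p : C2 := c 0 with hp
  have hpUD : p ∈ U \ D := (hmem 0 h01).1
  -- a globally continuous extension of `lam`
  set lam' : ℝ → ℂ := fun u => lam ((Set.projIcc (0:ℝ) 1 zero_le_one u : ℝ)) with hlam'def
  have hlam'cont : Continuous lam' :=
    hlam.comp_continuous (continuous_subtype_val.comp continuous_projIcc)
      (fun u => (Set.projIcc (0:ℝ) 1 zero_le_one u).2)
  have hlam'eq : ∀ u ∈ Icc (0:ℝ) 1, lam' u = lam u := by
    intro u hu
    simp only [hlam'def, Set.projIcc_of_mem zero_le_one hu]
  -- the time primitive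
  set T : ℝ → ℂ := fun u => ∫ x in (0:ℝ)..u, lam' x with hTdef
  have hTderiv : ∀ u, HasDerivAt T (lam' u) u := fun u =>
    (hlam'cont.integral_hasStrictDerivAt 0 u).hasDerivAt
  have hTdiff : Differentiable ℝ T := fun u => (hTderiv u).differentiableAt
  have hTcont : Continuous T := hTdiff.continuous
  have hT0 : T 0 = 0 := by rw [hTdef]; exact intervalIntegral.integral_same
  have hT1 : T 1 = 0 := by
    have h : T 1 = ∫ s in (0:ℝ)..1, lam s := by
      rw [hTdef]
      refine intervalIntegral.integral_congr ?_
      intro u hu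
      exact hlam'eq u (by rwa [Set.uIcc_of_le zero_le_one] at hu)
    rw [h]; exact hzero
  -- description of `U \ D` and openness
  have hUD : ∀ z, z ∈ U \ D ↔ z ∈ U ∧ g₁ z ≠ 0 ∧ g₂ z ≠ 0 := by
    intro z
    simp only [hD, Set.mem_diff, Set.mem_setOf_eq, not_and, not_or]
    constructor
    · rintro ⟨h1, h2⟩; exact ⟨h1, h2 h1⟩
    · rintro ⟨h1, h2, h3⟩; exact ⟨h1, fun _ => ⟨h2, h3⟩⟩
  have hVopen : IsOpen (U \ D) := by
    rw [isOpen_iff_mem_nhds]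
    intro z hz
    obtain ⟨hzU, hz1, hz2⟩ := (hUD z).1 hz
    have e1 : ∀ᶠ w in nhds z, g₁ w ≠ 0 := (hg₁ z hzU).continuousAt.eventually_ne hz1
    have e2 : ∀ᶠ w in nhds z, g₂ w ≠ 0 := (hg₂ z hzU).continuousAt.eventually_ne hz2
    filter_upwards [hU.mem_nhds hzU, e1, e2] with w hw h1 h2
    exact (hUD w).2 ⟨hw, h1, h2⟩
  -- `Y` is analytic on `U \ D`
  have hYanalytic : ∀ z ∈ U \ D, AnalyticAt ℂ Y z := by
    intro z hz
    obtain ⟨hzU, hz1, hz2⟩ := (hUD z).1 hz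
    have hF : AnalyticAt ℂ (fun w => ((f₁ w / g₁ w, f₂ w / g₂ w) : C2)) z :=
      ((hf₁ z hzU).div (hg₁ z hzU) hz1).prod ((hf₂ z hzU).div (hg₂ z hzU) hz2)
    refine hF.congr ?_
    filter_upwards [hVopen.mem_nhds hz] with w hw
    obtain ⟨hwU, hw1, hw2⟩ := (hUD w).1 hw
    exact (hY w hwU hw1 hw2).symm
  -- derivative of the flow at any time
  have hFlowDeriv : ∀ t q, (t, q) ∈ Ω →
      HasDerivAt (fun T' : ℂ => Φ (T', q)) (Y (Φ (t, q))) t := by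
    intro t q htq
    have hq' : Φ (t, q) ∈ U \ D := hΦmem _ htq
    have h1 : HasDerivAt (fun h : ℂ => Φ (h, Φ (t, q))) (Y (Φ (t, q))) 0 := hflow _ hq'
    have ev1 : ∀ᶠ h : ℂ in nhds 0, (h + t, q) ∈ Ω := by
      have hco : ContinuousAt (fun h : ℂ => ((h + t, q) : ℂ × C2)) 0 := by fun_prop
      exact hco (hΩo.mem_nhds (by simpa using htq))
    have ev2 : ∀ᶠ h : ℂ in nhds 0, (h, Φ (t, q)) ∈ Ω := by
      have hco : ContinuousAt (fun h : ℂ => ((h, Φ (t, q)) : ℂ × C2)) 0 := by fun_prop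
      exact hco (hΩo.mem_nhds (h0mem _ hq'))
    have heq : (fun h : ℂ => Φ (h + t, q)) =ᶠ[nhds (0:ℂ)] fun h => Φ (h, Φ (t, q)) := by
      filter_upwards [ev1, ev2] with h h1' h2'
      exact hgroup h t q h1' htq h2'
    have h2 : HasDerivAt (fun h : ℂ => Φ (h + t, q)) (Y (Φ (t, q))) 0 :=
      h1.congr_of_eventuallyEq heq
    have h2' : HasDerivAt (fun h : ℂ => Φ (h + t, q)) (Y (Φ (t, q))) (t - t) := by
      rwa [sub_self]
    have h3 := h2'.comp_sub_const (x := t) (a := t)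
    have hfun : (fun z : ℂ => Φ (z - t + t, q)) = fun T' : ℂ => Φ (T', q) := by
      funext z
      have : z - t + t = z := by ring
      rw [this]
    rwa [hfun] at h3
  -- the comparison curve
  set γ : ℝ → C2 := fun u => Φ (T u, p) with hγdef
  have hγderiv : ∀ u, (T u, p) ∈ Ω → HasDerivAt γ (lam' u • Y (γ u)) u := by
    intro u hu
    exact HasDerivAt.scomp (x := u) (h := T) (hFlowDeriv (T u) p hu) (hTderiv u)
  -- the set where the curve is realized by the flow
  set P : ℝ → Prop := fun u => (T u, p) ∈ Ω ∧ Φ (T u, p) = c u with hPdef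
  set S : Set ℝ := {s | s ∈ Icc (0:ℝ) 1 ∧ ∀ u ∈ Icc (0:ℝ) s, P u} with hSdef
  have h0S : (0:ℝ) ∈ S := by
    refine ⟨h01, ?_⟩
    intro u hu
    have hu0 : u = 0 := le_antisymm hu.2 hu.1
    subst hu0
    refine ⟨?_, ?_⟩
    · show ((T 0, p) : ℂ × C2) ∈ Ω
      rw [hT0]; exact h0mem p hpUD
    · show Φ (T 0, p) = c 0
      rw [hT0]; exact hΦ0 p hpUD
  have hSbdd : BddAbove S := ⟨1, fun s hs => hs.1.2⟩
  have hSne : S.Nonempty := ⟨0, h0S⟩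
  set b := sSup S with hbdef
  have hb0 : 0 ≤ b := le_csSup hSbdd h0S
  have hb1 : b ≤ 1 := csSup_le hSne fun s hs => hs.1.2
  have hbI : b ∈ Icc (0:ℝ) 1 := ⟨hb0, hb1⟩
  have hKcomp : IsCompact (c '' Icc (0:ℝ) 1) := isCompact_Icc.image_of_continuousOn hc
  have hKsub : c '' Icc (0:ℝ) 1 ⊆ U \ D := by
    rintro _ ⟨s, hs, rfl⟩; exact (hmem s hs).1
  -- P holds at b
  obtain ⟨u, humono, hutend, humem⟩ := exists_seq_tendsto_sSup hSne hSbdd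
  have huI : ∀ n, u n ∈ Icc (0:ℝ) 1 := fun n => (humem n).1
  have hPu : ∀ n, P (u n) := fun n => (humem n).2 (u n) ⟨(huI n).1, le_refl _⟩
  have hqn_tend : Tendsto (fun n => ((T (u n), p) : ℂ × C2)) atTop (nhds (T b, p)) :=
    Filter.Tendsto.prodMk_nhds ((hTcont.tendsto b).comp hutend) tendsto_const_nhds
  have hutend' : Tendsto u atTop (nhdsWithin b (Icc (0:ℝ) 1)) :=
    tendsto_nhdsWithin_iff.2 ⟨hutend, Filter.Eventually.of_forall huI⟩
  have hc_tend : Tendsto (fun n => c (u n)) atTop (nhds (c b)) := (hc b hbI).tendsto.comp hutend'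
  have hPb : P b := by
    have hclosure : ((T b, p) : ℂ × C2) ∈ closure Ω :=
      mem_closure_of_tendsto hqn_tend (Filter.Eventually.of_forall fun n => (hPu n).1)
    rw [closure_eq_self_union_frontier] at hclosure
    rcases hclosure with hin | hfr
    · refine ⟨hin, ?_⟩
      have hΦcont : ContinuousAt Φ (T b, p) := (hΦdiff _ hin).continuousAt
      have hl1 : Tendsto (fun n => Φ (T (u n), p)) atTop (nhds (Φ (T b, p))) :=
        hΦcont.tendsto.comp hqn_tend
      have hl2 : Tendsto (fun n => Φ (T (u n), p)) atTop (nhds (c b)) :=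
        hc_tend.congr (fun n => ((hPu n).2).symm)
      exact tendsto_nhds_unique hl1 hl2
    · exfalso
      have hev := hesc (fun n => (T (u n), p)) (T b, p) (fun n => (hPu n).1) hfr hqn_tend
        (c '' Icc (0:ℝ) 1) hKsub hKcomp
      obtain ⟨n, hn⟩ := hev.exists
      apply hn
      rw [(hPu n).2]
      exact mem_image_of_mem c (huI n)
  have hbS : b ∈ S := by
    refine ⟨hbI, ?_⟩
    intro v hv
    rcases eq_or_lt_of_le hv.2 with hvb | hvb
    · rw [hvb]; exact hPb
    · obtain ⟨s, hsS, hvs⟩ := exists_lt_of_lt_csSup hSne hvb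
      exact hsS.2 v ⟨hv.1, le_of_lt hvs⟩
  rcases eq_or_lt_of_le hb1 with hbeq | hblt
  · -- b = 1 : then c 1 = c 0, contradicting injectivity
    have hP1 : P 1 := hbeq ▸ hPb
    have hcc : c 0 = c 1 := by
      have h := hP1.2
      rw [hT1] at h
      rw [← h]
      exact (hΦ0 p hpUD).symm
    have : (0:ℝ) = 1 := hinj h01 h11 hcc
    norm_num at this
  · -- b < 1 : extend, contradicting the supremum
    have hqb : ((T b, p) : ℂ × C2) ∈ Ω := hPb.1
    have hcbUD : c b ∈ U \ D := (hmem b hbI).1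
    -- local Lipschitz bound for Y near c b
    have hYcd : ContDiffAt ℝ 1 Y (c b) :=
      ((hYanalytic _ hcbUD).restrictScalars : AnalyticAt ℝ Y (c b)).contDiffAt
    obtain ⟨K, t, htmem, hKlip⟩ := hYcd.exists_lipschitzOnWith
    obtain ⟨ρ, hρpos, hρsub⟩ := Metric.mem_nhds_iff.1 htmem
    have hlipball : LipschitzOnWith K Y (ball (c b) ρ) := hKlip.mono hρsub
    -- global bound for lam'
    obtain ⟨Cb, hCb⟩ := isCompact_Icc.exists_bound_of_continuousOn hlam
    have hlam'bd : ∀ v, ‖lam' v‖ ≤ Cb := fun v =>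
      hCb _ (Set.projIcc (0:ℝ) 1 zero_le_one v).2
    have hv : ∀ v : ℝ, LipschitzOnWith (Cb.toNNReal * K)
        (fun x : C2 => lam' v • Y x) (ball (c b) ρ) := by
      intro v
      rw [lipschitzOnWith_iff_dist_le_mul] at hlipball ⊢
      intro x hx y hy
      rw [dist_smul₀]
      have h1 : dist (Y x) (Y y) ≤ (K : ℝ) * dist x y := hlipball x hx y hy
      have h2 : ‖lam' v‖ ≤ (Cb.toNNReal : ℝ) :=
        le_trans (hlam'bd v) (Real.le_coe_toNNReal Cb)
      calc ‖lam' v‖ * dist (Y x) (Y y) ≤ (Cb.toNNReal : ℝ) * ((K : ℝ) * dist x y) :=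
            mul_le_mul h2 h1 dist_nonneg (Cb.toNNReal.coe_nonneg)
        _ = ((Cb.toNNReal * K : NNReal) : ℝ) * dist x y := by push_cast; ring
    -- choose the extension length
    have hγcont : ContinuousAt γ b := (hγderiv b hqb).differentiableAt.continuousAt
    have hγb : γ b = c b := hPb.2
    have he1 : ∀ᶠ v in nhds b, γ v ∈ ball (c b) ρ := by
      have : ball (c b) ρ ∈ nhds (γ b) := by rw [hγb]; exact ball_mem_nhds _ hρpos
      exact hγcont.eventually_mem this
    have he2 : ∀ᶠ v in nhds b, ((T v, p) : ℂ × C2) ∈ Ω := by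
      have hco : Continuous (fun v : ℝ => ((T v, p) : ℂ × C2)) :=
        hTcont.prodMk continuous_const
      exact hco.continuousAt (hΩo.mem_nhds hqb)
    obtain ⟨δ₁, hδ₁pos, hδ₁⟩ := Metric.eventually_nhds_iff.1 (he1.and he2)
    have he3 : c ⁻¹' ball (c b) ρ ∈ nhdsWithin b (Icc (0:ℝ) 1) :=
      (hc b hbI) (ball_mem_nhds _ hρpos)
    obtain ⟨δ₂, hδ₂pos, hδ₂⟩ := Metric.mem_nhdsWithin_iff.1 he3
    set ε := min (min (δ₁/2) (δ₂/2)) (1 - b) with hεdef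
    have hεpos : 0 < ε := lt_min (lt_min (by linarith) (by linarith)) (by linarith)
    have hεδ₁ : ε ≤ δ₁/2 := le_trans (min_le_left _ _) (min_le_left _ _)
    have hεδ₂ : ε ≤ δ₂/2 := le_trans (min_le_left _ _) (min_le_right _ _)
    have hbε1 : b + ε ≤ 1 := by
      have := min_le_right (min (δ₁/2) (δ₂/2)) (1 - b); linarith
    have hsubI : Icc b (b+ε) ⊆ Icc (0:ℝ) 1 := fun v hv =>
      ⟨le_trans hb0 hv.1, le_trans hv.2 hbε1⟩
    have hdist : ∀ v ∈ Icc b (b+ε), dist v b < δ₁ ∧ dist v b < δ₂ := by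
      intro v hv
      have habs : |v - b| ≤ ε := by
        rw [abs_of_nonneg (sub_nonneg.2 hv.1)]
        linarith [hv.2]
      rw [Real.dist_eq]
      constructor <;> linarith
    have hΩmem : ∀ v ∈ Icc b (b+ε), ((T v, p) : ℂ × C2) ∈ Ω := fun v hv =>
      (hδ₁ (hdist v hv).1).2
    have hγball : ∀ v ∈ Icc b (b+ε), γ v ∈ ball (c b) ρ := fun v hv =>
      (hδ₁ (hdist v hv).1).1
    have hcball : ∀ v ∈ Icc b (b+ε), c v ∈ ball (c b) ρ := fun v hv =>
      hδ₂ ⟨Metric.mem_ball.2 (hdist v hv).2, hsubI hv⟩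
    -- uniqueness of solutions
    have hEq : EqOn γ c (Icc b (b+ε)) := by
      refine ODE_solution_unique_of_mem_Icc_right
        (v := fun v x => lam' v • Y x) (s := fun _ => ball (c b) ρ) (fun v _ => hv v)
        ?_ ?_ ?_ ?_ ?_ ?_ hγb
      · intro v hv
        exact ((hγderiv v (hΩmem v hv)).differentiableAt.continuousAt).continuousWithinAt
      · intro v hv
        exact (hγderiv v (hΩmem v (Ico_subset_Icc_self hv))).hasDerivWithinAt
      · intro v hv
        exact hγball v (Ico_subset_Icc_self hv)
      · exact hc.mono hsubI
      · intro v hv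
        have hvI : v ∈ Icc (0:ℝ) 1 := hsubI (Ico_subset_Icc_self hv)
        show HasDerivWithinAt c (lam' v • Y (c v)) (Ici v) v
        rw [hlam'eq v hvI]
        exact (htang v hvI).hasDerivWithinAt
      · intro v hv
        exact hcball v (Ico_subset_Icc_self hv)
    have hbεS : b + ε ∈ S := by
      refine ⟨⟨by linarith, hbε1⟩, ?_⟩
      intro v hv
      rcases le_or_gt v b with hvb | hvb
      · exact hbS.2 v ⟨hv.1, hvb⟩
      · have hvI : v ∈ Icc b (b+ε) := ⟨le_of_lt hvb, hv.2⟩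
        exact ⟨hΩmem v hvI, hEq hvI⟩
    have : b + ε ≤ b := le_csSup hSbdd hbεS
    linarith

end
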